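/- For any Hermitian matrix M and normalized density matrix σ on a finite-dimensional Hilbert space with supp(M) ⊆ supp(σ), the trace norm of M is bounded by the σ-weighted Schatten-2 norm: ‖M‖₁ ≤ ‖σ^{-1/4} M σ^{-1/4}‖₂, where σ^{-1} denotes the Moore–Penrose pseudoinverse. -/

import Mathlib

open Matrix MeasureTheory
open scoped ComplexOrder BigOperators

noncomputable section

variable {n : Type*} [Fintype n] [DecidableEq n]

/-- Frobenius / Schatten-2 norm. -/
def frob (M : Matrix n n ℂ) : ℝ := Real.sqrt (Mᴴ * M).trace.re

/-- Trace / Schatten-1 norm. -/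
def trNorm (M : Matrix n n ℂ) : ℝ :=
  ((Matrix.posSemidef_conjTranspose_mul_self M).1.eigenvectorUnitary.1 *
    diagonal (((↑) : ℝ → ℂ) ∘ (√·) ∘ (Matrix.posSemidef_conjTranspose_mul_self M).1.eigenvalues) *
    (star (Matrix.posSemidef_conjTranspose_mul_self M).1.eigenvectorUnitary : Matrix n n ℂ)).trace.re

/-- Real power of a Hermitian matrix via the spectral decomposition, sending zero
eigenvalues to zero (hence Moore–Penrose pseudoinverse powers for negative exponents);
junk value `0` for non-Hermitian input. -/
def mpow (M : Matrix n n ℂ) (r : ℝ) : Matrix n n ℂ :=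
  if h : M.IsHermitian then
    (h.eigenvectorUnitary : Matrix n n ℂ) *
      Matrix.diagonal (fun i =>
        ((if h.eigenvalues i = 0 then (0:ℝ) else h.eigenvalues i ^ r : ℝ) : ℂ)) *
      (h.eigenvectorUnitary : Matrix n n ℂ)ᴴ
  else 0

/-- Operator (Schatten-∞) norm. -/
def opNorm (M : Matrix n n ℂ) : ℝ := ‖(Matrix.toEuclideanLin M).toContinuousLinearMap‖

/-- Support of a matrix, i.e. its range as a linear map. -/
def supp (M : Matrix n n ℂ) : Submodule ℂ (n → ℂ) := LinearMap.range M.mulVecLin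

/-- Rényi-2 divergence (base 2). -/
def D2 (α β : Matrix n n ℂ) : ℝ :=
  2 * Real.logb 2 (frob (mpow β (-(1/4)) * α * mpow β (-(1/4))))

/-- Max (Rényi-∞) divergence (base 2). -/
def Dinf (α β : Matrix n n ℂ) : ℝ :=
  Real.logb 2 (opNorm (mpow β (-(1/2)) * α * mpow β (-(1/2))))

/-- Kronecker / tensor product of square matrices, on the product index type. -/
def kron {m : Type*} (P : Matrix n n ℂ) (Q : Matrix m m ℂ) : Matrix (n × m) (n × m) ℂ :=
  fun z w => P z.1 w.1 * Q z.2 w.2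

/-!
With `W = sign M`, a Hermitian contraction, `‖M‖₁ = tr (W M)`. Put `B = σ^{1/4}` and
`N = σ^{-1/4} M σ^{-1/4}`. Since `σ^{1/4} σ^{-1/4}` is the identity on the range of `σ`, the
support condition gives `M = B N B`, hence `‖M‖₁ = tr ((B W B) N) ≤ ‖B W B‖₂ ‖N‖₂` by
Cauchy–Schwarz for the Hilbert–Schmidt inner product. Finally
`‖B W B‖₂² = tr (σ^{1/2} W σ^{1/2} W) ≤ ‖σ^{1/2}‖₂ ‖W σ^{1/2} W‖₂ ≤ ‖σ^{1/2}‖₂² = tr σ = 1`,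
because multiplying by a contraction does not increase the Frobenius norm.
-/

section

open scoped MatrixOrder

variable {n : Type*} [Fintype n]

@[fun_prop]
lemma Matrix.continuousOn_spectrum_real {𝕜 : Type*} [RCLike 𝕜] [DecidableEq n] (f : ℝ → ℝ)
    (A : Matrix n n 𝕜) : ContinuousOn f (spectrum ℝ A) :=
  A.finite_real_spectrum.continuousOn f

lemma Matrix.PosSemidef.re_trace_nonneg {A : Matrix n n ℂ} (hA : A.PosSemidef) :
    0 ≤ A.trace.re :=
  (Complex.nonneg_iff.1 hA.trace_nonneg).1

lemma Matrix.trace_conjTranspose_mul_eq_sum (X Y : Matrix n n ℂ) :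
    (Xᴴ * Y).trace = ∑ p : n × n, star (X p.2 p.1) * Y p.2 p.1 := by
  simp [trace, mul_apply, Fintype.sum_prod_type]

lemma frob_eq_sqrt_sum (X : Matrix n n ℂ) : frob X = √(∑ p : n × n, ‖X p.2 p.1‖ ^ 2) := by
  rw [frob, trace_conjTranspose_mul_eq_sum, Complex.re_sum]
  congr 1
  refine Finset.sum_congr rfl fun p _ => ?_
  rw [Complex.star_def, Complex.conj_mul', ← Complex.ofReal_pow, Complex.ofReal_re]

lemma frob_sq (X : Matrix n n ℂ) : frob X ^ 2 = (Xᴴ * X).trace.re :=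
  Real.sq_sqrt (posSemidef_conjTranspose_mul_self X).re_trace_nonneg

lemma frob_conjTranspose (X : Matrix n n ℂ) : frob Xᴴ = frob X := by
  rw [frob, frob, conjTranspose_conjTranspose, trace_mul_comm]

lemma re_trace_conjTranspose_mul_le (X Y : Matrix n n ℂ) :
    (Xᴴ * Y).trace.re ≤ frob X * frob Y := by
  rw [frob_eq_sqrt_sum, frob_eq_sqrt_sum, trace_conjTranspose_mul_eq_sum, Complex.re_sum]
  calc _ ≤ ∑ p : n × n, ‖X p.2 p.1‖ * ‖Y p.2 p.1‖ := Finset.sum_le_sum fun p _ => by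
          simpa using Complex.re_le_norm (star (X p.2 p.1) * Y p.2 p.1)
    _ ≤ _ := Real.sum_mul_le_sqrt_mul_sqrt _ _ _

variable [DecidableEq n]

lemma frob_mul_le_of_posSemidef_one_sub {W : Matrix n n ℂ} (hW : (1 - Wᴴ * W).PosSemidef)
    (X : Matrix n n ℂ) : frob (W * X) ≤ frob X := by
  have h := (hW.conjTranspose_mul_mul_same X).re_trace_nonneg
  rw [mul_sub, mul_one, sub_mul, trace_sub, Complex.sub_re, sub_nonneg] at h
  refine Real.sqrt_le_sqrt ?_
  simpa [conjTranspose_mul, mul_assoc] using h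

lemma frob_mul_le_of_posSemidef_one_sub' {W : Matrix n n ℂ} (hW : (1 - W * Wᴴ).PosSemidef)
    (X : Matrix n n ℂ) : frob (X * W) ≤ frob X := by
  have h := frob_mul_le_of_posSemidef_one_sub (W := Wᴴ) (by rwa [conjTranspose_conjTranspose]) Xᴴ
  rwa [← conjTranspose_mul, frob_conjTranspose, frob_conjTranspose] at h

lemma frob_mul_mul_le_frob_mul_self {B W : Matrix n n ℂ} (hB : B.IsHermitian)
    (hW : W.IsHermitian) (hW1 : (1 - W * W).PosSemidef) : frob (B * W * B) ≤ frob (B * B) := by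
  set S := B * B with hS
  have hSH : Sᴴ = S := by rw [hS, conjTranspose_mul, hB.eq]
  have hsq : frob (B * W * B) ^ 2 ≤ frob S ^ 2 := calc
    frob (B * W * B) ^ 2 = (Sᴴ * (W * S * W)).trace.re := by
      rw [frob_sq, hSH, conjTranspose_mul, conjTranspose_mul, hB.eq, hW.eq, trace_mul_comm S]
      simp only [hS, mul_assoc]
      rw [trace_mul_comm B]
      simp only [mul_assoc]
    _ ≤ frob S * frob (W * S * W) := re_trace_conjTranspose_mul_le _ _
    _ ≤ frob S * frob S := by
      gcongr
      · exact Real.sqrt_nonneg _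
      calc frob (W * S * W) ≤ frob (W * S) :=
            frob_mul_le_of_posSemidef_one_sub' (by rwa [hW.eq]) _
        _ ≤ frob S := frob_mul_le_of_posSemidef_one_sub (by rwa [hW.eq]) _
    _ = frob S ^ 2 := (sq _).symm
  exact (pow_le_pow_iff_left₀ (Real.sqrt_nonneg _) (Real.sqrt_nonneg _) two_ne_zero).1 hsq

-- `Real.zero_rpow` already sends the zero eigenvalues to `0`, as `mpow` does.
lemma mpow_eq_cfc_rpow {σ : Matrix n n ℂ} (hσ : σ.IsHermitian) {r : ℝ} (hr : r ≠ 0) :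
    mpow σ r = cfc (fun x : ℝ => x ^ r) σ := by
  rw [mpow, dif_pos hσ, hσ.cfc_eq, IsHermitian.cfc, Unitary.conjStarAlgAut_apply]
  congr
  funext i
  split_ifs with h <;> simp [h, Real.zero_rpow hr]

lemma cfc_rpow_one {σ : Matrix n n ℂ} (hσ : σ.IsHermitian) :
    cfc (fun x : ℝ => x ^ (1 : ℝ)) σ = σ := by
  simp only [Real.rpow_one]
  exact cfc_id' ℝ σ hσ.isSelfAdjoint

lemma cfc_rpow_mul_cfc_rpow {σ : Matrix n n ℂ} (hσ : σ.PosSemidef) {r s : ℝ} (h : r + s ≠ 0) :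
    cfc (fun x : ℝ => x ^ r) σ * cfc (fun x : ℝ => x ^ s) σ =
      cfc (fun x : ℝ => x ^ (r + s)) σ := by
  rw [← cfc_mul]
  exact cfc_congr fun x hx =>
    (Real.rpow_add' (spectrum_nonneg_of_nonneg (nonneg_iff_posSemidef.2 hσ) hx) h).symm

lemma cfc_rpow_mul_cfc_rpow_neg_mul_self {σ : Matrix n n ℂ} (hσ : σ.PosSemidef) (r : ℝ) :
    cfc (fun x : ℝ => x ^ r) σ * cfc (fun x : ℝ => x ^ (-r)) σ * σ = σ := by
  have hid := cfc_id' ℝ σ hσ.1.isSelfAdjoint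
  calc _ = cfc (fun x : ℝ => x ^ r) σ * cfc (fun x : ℝ => x ^ (-r)) σ *
        cfc (fun x : ℝ => x) σ := by rw [hid]
    _ = cfc (fun x : ℝ => x) σ := by
        rw [← cfc_mul, ← cfc_mul]
        refine cfc_congr fun x hx => ?_
        rcases (spectrum_nonneg_of_nonneg (nonneg_iff_posSemidef.2 hσ) hx).eq_or_lt with h | h
        · simp [← h]
        · simp [Real.rpow_neg h.le, (Real.rpow_pos_of_pos h r).ne']
    _ = σ := hid

lemma frob_cfc_rpow_half {σ : Matrix n n ℂ} (hσ : σ.PosSemidef) :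
    frob (cfc (fun x : ℝ => x ^ (1/2 : ℝ)) σ) = √σ.trace.re := by
  have hH : (cfc (fun x : ℝ => x ^ (1/2 : ℝ)) σ).IsHermitian := cfc_predicate _ _
  rw [frob, hH.eq, cfc_rpow_mul_cfc_rpow hσ (by norm_num), show (1/2 + 1/2 : ℝ) = 1 by norm_num,
    cfc_rpow_one hσ.1]

lemma trNorm_eq_re_trace_cfc_sqrt (X : Matrix n n ℂ) :
    trNorm X = (cfc Real.sqrt (Xᴴ * X)).trace.re := by
  rw [(posSemidef_conjTranspose_mul_self X).1.cfc_eq, IsHermitian.cfc,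
    Unitary.conjStarAlgAut_apply]
  rfl

lemma Matrix.IsHermitian.trNorm_eq_re_trace_cfc_sign_mul {M : Matrix n n ℂ}
    (hM : M.IsHermitian) :
    trNorm M = (cfc (fun x : ℝ => (SignType.sign x : ℝ)) M * M).trace.re := by
  have hsq : Mᴴ * M = cfc (fun x : ℝ => x ^ 2) M := by
    rw [cfc_pow (ha := hM.isSelfAdjoint), cfc_id' ℝ M hM.isSelfAdjoint, hM.eq, sq]
  have hsign : cfc (fun x : ℝ => (SignType.sign x : ℝ)) M * M = cfc (fun x : ℝ => |x|) M := by
    nth_rewrite 2 [← cfc_id' ℝ M hM.isSelfAdjoint]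
    rw [← cfc_mul]
    exact cfc_congr fun x _ => sign_mul_self x
  rw [trNorm_eq_re_trace_cfc_sqrt, hsq, ← cfc_comp' Real.sqrt (· ^ 2) M (ha := hM.isSelfAdjoint),
    hsign]
  congr 3
  funext x
  exact Real.sqrt_sq_eq_abs x

lemma posSemidef_one_sub_cfc_sign_mul_self (M : Matrix n n ℂ) :
    (1 - cfc (fun x : ℝ => (SignType.sign x : ℝ)) M *
      cfc (fun x : ℝ => (SignType.sign x : ℝ)) M).PosSemidef := by
  rw [← nonneg_iff_posSemidef, sub_nonneg, ← cfc_mul]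
  refine cfc_le_one _ _ fun x _ => ?_
  cases SignType.sign x <;> simp

lemma mul_eq_self_of_supp_le {T σ M : Matrix n n ℂ} (hT : T * σ = σ) (h : supp M ≤ supp σ) :
    T * M = M := by
  refine ext_of_mulVec_single fun j => ?_
  obtain ⟨y, hy⟩ := h ⟨Pi.single j 1, rfl⟩
  rw [mulVecLin_apply, mulVecLin_apply] at hy
  rw [← mulVec_mulVec, ← hy, mulVec_mulVec, hT]

lemma Matrix.IsHermitian.eq_sandwich_of_supp_le {M σ A B : Matrix n n ℂ} (hM : M.IsHermitian)
    (hA : A.IsHermitian) (hB : B.IsHermitian) (hBA : B * A * σ = σ) (h : supp M ≤ supp σ) :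
    M = B * (A * M * A) * B := by
  have hBAM : B * A * M = M := mul_eq_self_of_supp_le hBA h
  have hMAB : M * A * B = M := by
    simpa [conjTranspose_mul, hM.eq, hA.eq, hB.eq, mul_assoc] using congrArg (·ᴴ) hBAM
  calc M = B * A * M * (A * B) := by rw [hBAM, ← mul_assoc, hMAB]
    _ = _ := by simp only [mul_assoc]

end

/-- Matrix-weighted Cauchy–Schwarz: for Hermitian `M` and a normalized density matrix `σ`
with `supp M ⊆ supp σ`, `‖M‖₁ ≤ ‖σ^{-1/4} M σ^{-1/4}‖₂`. -/
theorem weighted_cauchy_schwarz {n : Type*} [Fintype n] [DecidableEq n]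
    (M σ : Matrix n n ℂ) (hM : M.IsHermitian) (hσ : σ.PosSemidef) (hσtr : σ.trace = 1)
    (hsupp : supp M ≤ supp σ) :
    trNorm M ≤ frob (mpow σ (-(1/4)) * M * mpow σ (-(1/4))) := by
  rw [mpow_eq_cfc_rpow hσ.1 (by norm_num)]
  set A := cfc (fun x : ℝ => x ^ (-(1/4) : ℝ)) σ
  set B := cfc (fun x : ℝ => x ^ (1/4 : ℝ)) σ
  set W := cfc (fun x : ℝ => (SignType.sign x : ℝ)) M
  have hA : A.IsHermitian := cfc_predicate _ _
  have hB : B.IsHermitian := cfc_predicate _ _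
  have hW : W.IsHermitian := cfc_predicate _ _
  have hM_eq : M = B * (A * M * A) * B :=
    hM.eq_sandwich_of_supp_le hA hB (cfc_rpow_mul_cfc_rpow_neg_mul_self hσ _) hsupp
  have hBB : frob (B * B) = 1 := by
    rw [cfc_rpow_mul_cfc_rpow hσ (by norm_num), show (1/4 + 1/4 : ℝ) = 1/2 by norm_num,
      frob_cfc_rpow_half hσ, hσtr, Complex.one_re, Real.sqrt_one]
  calc trNorm M = (W * (B * (A * M * A) * B)).trace.re := by
        rw [hM.trNorm_eq_re_trace_cfc_sign_mul, ← hM_eq]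
    _ = ((B * W * B)ᴴ * (A * M * A)).trace.re := by
        rw [conjTranspose_mul, conjTranspose_mul, hB.eq, hW.eq, ← mul_assoc, trace_mul_comm _ B]
        simp only [mul_assoc]
    _ ≤ frob (B * W * B) * frob (A * M * A) := re_trace_conjTranspose_mul_le _ _
    _ ≤ frob (B * B) * frob (A * M * A) := by
        gcongr
        · exact Real.sqrt_nonneg _
        exact frob_mul_mul_le_frob_mul_self hB hW (posSemidef_one_sub_cfc_sign_mul_self M)
    _ = frob (A * M * A) := by rw [hBB, one_mul]
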